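/- The identity ∏_{i=1}^{n}(u - x_i) = u^n + Σ_{r=1}^{n} (-1)^r (1 + βu)^{r-1} u^{n-r} G_{1^r}(x₁,…,xₙ) holds in ℤ[β][x₁,…,xₙ][u], where the Grothendieck polynomials G_{1^r} are defined by the relation ∏_{i=1}^{n}(u + x_i + βux_i) = u^n + (1+βu)Σ_{r=1}^n u^{n-r} G_{1^r}(x). -/

import Mathlib

open Polynomial Finset

lemma one_add_CX_regular {R : Type*} [CommRing R] (β : R) :
    (1 + Polynomial.C β * Polynomial.X : R[X]) ∈ nonZeroDivisors (R[X]) := by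
  rw [mem_nonZeroDivisors_iff_right]
  intro g hg
  have h1 : g = g * (-(Polynomial.C β * Polynomial.X)) := by
    linear_combination hg
  have key : ∀ m : ℕ, g = g * (-(Polynomial.C β * Polynomial.X)) ^ m := by
    intro m
    induction m with
    | zero => simp
    | succ k ih => rw [pow_succ, ← mul_assoc, ← ih]; exact h1
  ext k
  have h2 : g = g * ((-Polynomial.C β) ^ (k+1)) * Polynomial.X ^ (k+1) := by
    nth_rewrite 1 [key (k+1)]; ring
  calc g.coeff k = (g * ((-Polynomial.C β) ^ (k+1)) * Polynomial.X ^ (k+1)).coeff k := by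
        rw [← h2]
    _ = 0 := by rw [Polynomial.coeff_mul_X_pow']; simp

theorem column_grothendieck_alt_generating_function {R : Type*} [CommRing R]
    (n : ℕ) (β : R) (x : Fin n → R) (G : ℕ → R)
    (hG : (∏ i : Fin n, (Polynomial.X * Polynomial.C (1 + β * x i) + Polynomial.C (x i)))
        = Polynomial.X ^ n + (1 + Polynomial.C β * Polynomial.X)
            * ∑ r ∈ Finset.Icc 1 n, Polynomial.X ^ (n - r) * Polynomial.C (G r)) :
    (∏ i : Fin n, (Polynomial.X - Polynomial.C (x i)))
      = Polynomial.X ^ n + ∑ r ∈ Finset.Icc 1 n,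
          (-1 : Polynomial R) ^ r * (1 + Polynomial.C β * Polynomial.X) ^ (r - 1)
            * Polynomial.X ^ (n - r) * Polynomial.C (G r) := by
  classical
  let B := Localization.Away (1 + Polynomial.C β * Polynomial.X : R[X])
  have hreg := one_add_CX_regular (R := R) β
  have hinj : Function.Injective (algebraMap (R[X]) B) :=
    IsLocalization.injective B (Submonoid.powers_le.2 hreg)
  apply hinj
  set φ : R[X] →+* B := algebraMap (R[X]) B with hφ
  set c : R →+* B := φ.comp Polynomial.C with hc
  set u : B := φ Polynomial.X with hu
  set w : B := IsLocalization.Away.invSelf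
    (S := B) (1 + Polynomial.C β * Polynomial.X : R[X]) with hwdef
  set F : B := φ (1 + Polynomial.C β * Polynomial.X) with hFdef
  have hw : F * w = 1 := IsLocalization.Away.mul_invSelf _
  have hF : F = 1 + c β * u := by
    rw [hFdef, map_add, map_mul, map_one]; rfl
  set v : B := -u * w with hv
  have hFv : F * v = -u := by
    rw [hv]
    calc F * (-u * w) = -u * (F * w) := by ring
    _ = -u := by rw [hw]; ring
  have hwv : (1 : B) + c β * v = w := by
    rw [hv]
    have h1 : (1 + c β * u) * w = 1 := by rw [← hF]; exact hw
    linear_combination -h1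
  -- apply eval₂ c v to hG
  have key := congrArg (Polynomial.eval₂ c v) hG
  simp only [Polynomial.eval₂_finset_prod, Polynomial.eval₂_add, Polynomial.eval₂_mul,
    Polynomial.eval₂_pow, Polynomial.eval₂_X, Polynomial.eval₂_C, Polynomial.eval₂_one,
    Polynomial.eval₂_finset_sum] at key
  -- key : ∏ i, (v * c (1 + β * x i) + c (x i)) = v ^ n + (1 + c β * v) * ∑ ...
  have main : (∏ i : Fin n, (c (x i) - u))
      = (-u) ^ n + ∑ r ∈ Finset.Icc 1 n, F ^ (r - 1) * (-u) ^ (n - r) * c (G r) := by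
    have h1 : F ^ n * ∏ i : Fin n, (v * c (1 + β * x i) + c (x i))
        = ∏ i : Fin n, (c (x i) - u) := by
      calc F ^ n * ∏ i : Fin n, (v * c (1 + β * x i) + c (x i))
          = ∏ i : Fin n, (F * (v * c (1 + β * x i) + c (x i))) := by
            rw [Finset.prod_mul_distrib, Finset.prod_const, Finset.card_fin]
        _ = ∏ i : Fin n, (c (x i) - u) := by
            refine Finset.prod_congr rfl fun i _ => ?_
            have hcx : c (1 + β * x i) = 1 + c β * c (x i) := by simp
            calc F * (v * c (1 + β * x i) + c (x i))
                = (F * v) * c (1 + β * x i) + F * c (x i) := by ring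
              _ = -u * (1 + c β * c (x i)) + (1 + c β * u) * c (x i) := by
                  rw [hFv, hF, hcx]
              _ = c (x i) - u := by ring
    have h2 : F ^ n * ((v : B) ^ n + (1 + c β * v)
          * ∑ r ∈ Finset.Icc 1 n, v ^ (n - r) * c (G r))
        = (-u) ^ n + ∑ r ∈ Finset.Icc 1 n, F ^ (r - 1) * (-u) ^ (n - r) * c (G r) := by
      rw [hwv, mul_add, ← mul_pow, hFv]
      congr 1
      rw [Finset.mul_sum, Finset.mul_sum]
      refine Finset.sum_congr rfl fun r hr => ?_
      obtain ⟨hr1, hrn⟩ := Finset.mem_Icc.mp hr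
      have hsplit : F ^ n = F ^ (r - 1) * F * F ^ (n - r) := by
        rw [mul_assoc, ← pow_succ', ← pow_add]
        congr 1
        omega
      calc F ^ n * (w * (v ^ (n - r) * c (G r)))
          = (F ^ (r - 1) * F * F ^ (n - r)) * (w * (v ^ (n - r) * c (G r))) := by
            rw [← hsplit]
        _ = F ^ (r - 1) * (F * w) * ((F * v) ^ (n - r)) * c (G r) := by
            rw [mul_pow]; ring
        _ = F ^ (r - 1) * (-u) ^ (n - r) * c (G r) := by rw [hw, hFv]; ring
    rw [← h1, key, h2]
  -- now push the algebra map through the goal and conclude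
  have hmain2 : (∏ i : Fin n, (u - c (x i)))
      = u ^ n + ∑ r ∈ Finset.Icc 1 n,
          (-1 : B) ^ r * F ^ (r - 1) * u ^ (n - r) * c (G r) := by
    have hneg : (∏ i : Fin n, (u - c (x i)))
        = (-1 : B) ^ n * ∏ i : Fin n, (c (x i) - u) := by
      calc (∏ i : Fin n, (u - c (x i)))
          = ∏ i : Fin n, ((-1 : B) * (c (x i) - u)) :=
            Finset.prod_congr rfl fun i _ => by ring
        _ = (-1 : B) ^ n * ∏ i : Fin n, (c (x i) - u) := by
            rw [Finset.prod_mul_distrib, Finset.prod_const, Finset.card_fin]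
    rw [hneg, main, mul_add, Finset.mul_sum]
    congr 1
    · rw [← mul_pow, neg_one_mul, neg_neg]
    · refine Finset.sum_congr rfl fun r hr => ?_
      obtain ⟨hr1, hrn⟩ := Finset.mem_Icc.mp hr
      have hsgn : ((-1 : B)) ^ n = (-1 : B) ^ (n - r) * (-1 : B) ^ r := by
        rw [← pow_add]
        congr 1
        omega
      have huu : (-1 : B) ^ (n - r) * (-u) ^ (n - r) = u ^ (n - r) := by
        rw [← mul_pow, neg_one_mul, neg_neg]
      calc (-1 : B) ^ n * (F ^ (r - 1) * (-u) ^ (n - r) * c (G r))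
          = ((-1 : B) ^ (n - r) * (-u) ^ (n - r))
              * ((-1 : B) ^ r * F ^ (r - 1) * c (G r)) := by
            rw [hsgn]; ring
        _ = (-1 : B) ^ r * F ^ (r - 1) * u ^ (n - r) * c (G r) := by rw [huu]; ring
  simp only [map_prod, map_sub, map_add, map_pow, map_sum, map_mul, map_neg, map_one]
  rw [hF] at hmain2
  exact hmain2
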